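/- In an orthomodular lattice admitting a strong set of quantum states, the n-Godowski equation holds for each n ≥ 3: (a₁→a₂)∩(a₂→a₃)∩⋯∩(aₙ₋₁→aₙ)∩(aₙ→a₁) equals the same expression with indices reversed, i.e., (aₙ→aₙ₋₁)∩⋯∩(a₂→a₁)∩(a₁→aₙ). -/

import Mathlib

/-- An ortholattice: an algebra ⟨L, ', ∪, ∩⟩ satisfying the standard identities. -/
structure OL (L : Type*) where
  compl : L → L
  join : L → L → L
  meet : L → L → L
  join_comm : ∀ a b, join a b = join b a
  join_assoc : ∀ a b c, join (join a b) c = join a (join b c)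
  compl_compl : ∀ a, compl (compl a) = a
  join_one : ∀ a b, join a (join b (compl b)) = join b (compl b)
  absorb : ∀ a b, join a (meet a b) = a
  meet_def : ∀ a b, meet a b = compl (join (compl a) (compl b))

/-- The ordering relation on an ortholattice: a ≤ b iff a ∩ b = a. -/
def OL.le {L : Type*} (O : OL L) (a b : L) : Prop := O.meet a b = a

/-- A state on an ortholattice: m : L → [0,1] with m(1) = 1 and finite additivity
on orthogonal pairs (a ⊥ b iff a ≤ b'). -/
def OL.IsState {L : Type*} (O : OL L) (m : L → ℝ) : Prop :=
  (∀ a, 0 ≤ m a ∧ m a ≤ 1) ∧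
  (∀ a, m (O.join a (O.compl a)) = 1) ∧
  (∀ a b, O.le a (O.compl b) → m (O.join a b) = m a + m b)

/-- Sasaki implication a → b := a' ∪ (a ∩ b). -/
def OL.arr {L : Type*} (O : OL L) (a b : L) : L := O.join (O.compl a) (O.meet a b)

/-- S is a strong set of quantum states on O. -/
def OL.IsStrongQuantum {L : Type*} (O : OL L) (S : Set (L → ℝ)) : Prop :=
  S.Nonempty ∧ (∀ m ∈ S, O.IsState m) ∧
  ∀ a b : L, ∃ m ∈ S, ((m a = 1 → m b = 1) → O.le a b)

/-- Meet of a nonempty list of elements: x ∩ (y₁ ∩ (⋯ ∩ yₖ)). -/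
def OL.meetList {L : Type*} (O : OL L) (x : L) : List L → L
  | [] => x
  | y :: t => O.meet x (O.meetList y t)

/-- The cyclic Godowski meet (a₀→a₁) ∩ (a₁→a₂) ∩ ⋯ ∩ (a_{n-1}→a₀), indices in
`Fin n` taken cyclically. -/
def OL.goMeet {L : Type*} (O : OL L) {n : ℕ} [NeZero n] (a : Fin n → L) : L :=
  O.meetList (O.arr (a 0) (a 1))
    ((List.ofFn fun i : Fin n => O.arr (a i) (a (i + 1))).tail)

/-!
Fix a state `m` with `m (goMeet b) = 1`. Then every factor `bᵢ → bᵢ₊₁` has value `1`, i.e.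
`m (bᵢ ∩ bᵢ₊₁) = m bᵢ`, so `m bᵢ ≤ m bᵢ₊₁`. Going once around the cycle forces all `m bᵢ` to be
equal, hence `m (bᵢ₊₁ → bᵢ) = 1 - m bᵢ₊₁ + m bᵢ = 1` as well. Strongness of `S` turns this into
`goMeet b ≤ bᵢ₊₁ → bᵢ` for every `i`, i.e. `goMeet b` lies below the reversed meet; reversal is an
involution, so the two meets coincide.
-/

lemma Fin.le_of_le_succ_cyclic {α : Type*} [Preorder α] {n : ℕ} {f : Fin (n + 1) → α}
    (hf : ∀ i, f i ≤ f (i + 1)) (i j : Fin (n + 1)) : f i ≤ f j := by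
  have from_zero : ∀ j, f 0 ≤ f j := by
    refine Fin.induction le_rfl fun j hj => ?_
    rw [← Fin.coeSucc_eq_succ]
    exact hj.trans (hf _)
  have to_zero : ∀ i, f i ≤ f 0 := by
    refine Fin.reverseInduction ?_ fun i hi => ?_
    · simpa using hf (Fin.last n)
    · rw [← Fin.coeSucc_eq_succ] at hi
      exact (hf _).trans hi
  exact (to_zero i).trans (from_zero j)

namespace OL

variable {L : Type*} (O : OL L)

lemma compl_join (a b : L) : O.compl (O.join a b) = O.meet (O.compl a) (O.compl b) := by
  rw [O.meet_def, O.compl_compl, O.compl_compl]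

lemma compl_meet (a b : L) : O.compl (O.meet a b) = O.join (O.compl a) (O.compl b) := by
  rw [O.meet_def, O.compl_compl]

lemma meet_comm (a b : L) : O.meet a b = O.meet b a := by
  rw [O.meet_def, O.meet_def, O.join_comm]

lemma meet_assoc (a b c : L) : O.meet (O.meet a b) c = O.meet a (O.meet b c) := by
  simp only [O.meet_def, O.compl_compl, O.join_assoc]

lemma meet_join_self (a b : L) : O.meet a (O.join a b) = a := by
  have h := O.compl_join a b
  rw [O.meet_def, h, O.absorb, O.compl_compl]

lemma join_self (a : L) : O.join a a = a := by
  have h := O.absorb a (O.join a a)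
  rwa [O.meet_join_self] at h

lemma meet_self (a : L) : O.meet a a = a := by
  rw [O.meet_def, O.join_self, O.compl_compl]

lemma le_refl (a : L) : O.le a a := O.meet_self a

lemma le_antisymm {a b : L} (hab : O.le a b) (hba : O.le b a) : a = b := by
  unfold OL.le at hab hba
  rw [← hab, O.meet_comm, hba]

lemma le_trans {a b c : L} (hab : O.le a b) (hbc : O.le b c) : O.le a c := by
  unfold OL.le at *
  rw [← hab, O.meet_assoc, hbc]

lemma meet_le_left (a b : L) : O.le (O.meet a b) a := by
  unfold OL.le
  rw [O.meet_comm, ← O.meet_assoc, O.meet_self]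

lemma meet_le_right (a b : L) : O.le (O.meet a b) b := by
  rw [O.meet_comm]
  exact O.meet_le_left b a

lemma le_meet {a b c : L} (hca : O.le c a) (hcb : O.le c b) : O.le c (O.meet a b) := by
  unfold OL.le at *
  rw [← O.meet_assoc, hca, hcb]

lemma le_join_left (a b : L) : O.le a (O.join a b) := O.meet_join_self a b

lemma le_compl_compl (a : L) : O.le a (O.compl (O.compl a)) := by
  rw [O.compl_compl]
  exact O.le_refl a

variable {O}

namespace IsState

variable {m : L → ℝ} (hm : O.IsState m)
include hm

lemma le_one (a : L) : m a ≤ 1 := (hm.1 a).2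

lemma map_compl (a : L) : m (O.compl a) = 1 - m a := by
  have h := hm.2.2 a (O.compl a) (O.le_compl_compl a)
  rw [hm.2.1 a] at h
  linarith

/-- Monotonicity holds in any ortholattice: `a ≤ b` makes `a` orthogonal to `b'`. -/
lemma mono {a b : L} (hab : O.le a b) : m a ≤ m b := by
  have hadd := hm.2.2 a (O.compl b) (by rwa [O.compl_compl])
  have := hm.le_one (O.join a (O.compl b))
  rw [hadd, hm.map_compl] at this
  linarith

lemma map_arr (a b : L) : m (O.arr a b) = 1 - m a + m (O.meet a b) := by
  have hortho : O.le (O.compl a) (O.compl (O.meet a b)) := by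
    rw [O.compl_meet]
    exact O.le_join_left _ _
  rw [OL.arr, hm.2.2 _ _ hortho, hm.map_compl]

lemma map_arr_eq_one_iff (a b : L) : m (O.arr a b) = 1 ↔ m (O.meet a b) = m a := by
  rw [hm.map_arr]
  constructor <;> intro h <;> linarith

end IsState

variable (O)

lemma meetList_le {x y : L} {l : List L} (h : y ∈ x :: l) : O.le (O.meetList x l) y := by
  induction l generalizing x with
  | nil =>
    rw [List.mem_singleton] at h
    subst h
    exact O.le_refl _
  | cons z t ih =>
    rcases List.mem_cons.mp h with rfl | h
    · exact O.meet_le_left _ _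
    · exact O.le_trans (O.meet_le_right x _) (ih h)

lemma le_meetList {c x : L} {l : List L} (h : ∀ y ∈ x :: l, O.le c y) :
    O.le c (O.meetList x l) := by
  induction l generalizing x with
  | nil => exact h x List.mem_cons_self
  | cons z t ih =>
    exact O.le_meet (h x List.mem_cons_self)
      (ih fun y hy => h y (List.mem_cons_of_mem _ hy))

lemma goMeet_eq {n : ℕ} (a : Fin (n + 1) → L) :
    O.goMeet a = O.meetList (O.arr (a 0) (a (0 + 1)))
      (List.ofFn fun i : Fin n => O.arr (a i.succ) (a (i.succ + 1))) := by
  rw [OL.goMeet, List.ofFn_succ]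
  simp

lemma goMeet_le {n : ℕ} (a : Fin (n + 1) → L) (i : Fin (n + 1)) :
    O.le (O.goMeet a) (O.arr (a i) (a (i + 1))) := by
  rw [O.goMeet_eq]
  apply O.meetList_le
  induction i using Fin.cases with
  | zero => exact List.mem_cons_self
  | succ j => exact List.mem_cons_of_mem _ (List.mem_ofFn.mpr ⟨j, rfl⟩)

lemma le_goMeet {n : ℕ} {c : L} {a : Fin (n + 1) → L}
    (h : ∀ i, O.le c (O.arr (a i) (a (i + 1)))) : O.le c (O.goMeet a) := by
  rw [O.goMeet_eq]
  apply O.le_meetList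
  intro y hy
  rcases List.mem_cons.mp hy with rfl | hy
  · exact h 0
  · obtain ⟨j, rfl⟩ := List.mem_ofFn.mp hy
    exact h j.succ

variable {O}

lemma IsState.map_meet_eq_of_map_goMeet_eq_one {m : L → ℝ} (hm : O.IsState m) {n : ℕ}
    {b : Fin (n + 1) → L} (hG : m (O.goMeet b) = 1) (i : Fin (n + 1)) :
    m (O.meet (b i) (b (i + 1))) = m (b i) :=
  (hm.map_arr_eq_one_iff _ _).mp
    (_root_.le_antisymm (hm.le_one _) (hG ▸ hm.mono (O.goMeet_le b i)))

lemma IsState.map_eq_of_map_goMeet_eq_one {m : L → ℝ} (hm : O.IsState m) {n : ℕ}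
    {b : Fin (n + 1) → L} (hG : m (O.goMeet b) = 1) (i j : Fin (n + 1)) :
    m (b i) = m (b j) := by
  have hstep : ∀ i, m (b i) ≤ m (b (i + 1)) := fun i => by
    rw [← hm.map_meet_eq_of_map_goMeet_eq_one hG i]
    exact hm.mono (O.meet_le_right _ _)
  exact _root_.le_antisymm (Fin.le_of_le_succ_cyclic hstep i j)
    (Fin.le_of_le_succ_cyclic hstep j i)

lemma goMeet_le_arr_succ_self {S : Set (L → ℝ)} (hS : O.IsStrongQuantum S) {n : ℕ}
    (b : Fin (n + 1) → L) (i : Fin (n + 1)) :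
    O.le (O.goMeet b) (O.arr (b (i + 1)) (b i)) := by
  obtain ⟨m, hmS, hstrong⟩ := hS.2.2 (O.goMeet b) (O.arr (b (i + 1)) (b i))
  refine hstrong fun hG => ?_
  have hm := hS.2.1 m hmS
  rw [hm.map_arr_eq_one_iff, O.meet_comm, hm.map_meet_eq_of_map_goMeet_eq_one hG i,
    hm.map_eq_of_map_goMeet_eq_one hG i (i + 1)]

lemma goMeet_le_goMeet_reverse {S : Set (L → ℝ)} (hS : O.IsStrongQuantum S) {n : ℕ}
    (b : Fin (n + 1) → L) : O.le (O.goMeet b) (O.goMeet fun i => b (-(i + 1))) := by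
  refine O.le_goMeet fun i => ?_
  have h := goMeet_le_arr_succ_self hS b (-(i + 1) - 1)
  rwa [sub_add_cancel, ← neg_add'] at h

end OL

/-- `i ↦ -(i + 1)` on `Fin n` is the paper's reversal `aᵢ ↦ aₙ₋ᵢ₊₁` of 1-based indices. -/
theorem stmt_7_general {L : Type*} (O : OL L)
    (S : Set (L → ℝ)) (hS : O.IsStrongQuantum S)
    (n : ℕ) (a : Fin (n + 3) → L) :
    O.goMeet a = O.goMeet (fun i => a (-(i + 1))) := by
  have hreverse : (fun i => a (-(-(i + 1) + 1))) = a := by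
    funext i
    rw [neg_add, neg_neg, add_neg_cancel_right]
  have hle := OL.goMeet_le_goMeet_reverse hS fun i => a (-(i + 1))
  rw [hreverse] at hle
  exact O.le_antisymm (OL.goMeet_le_goMeet_reverse hS a) hle

/-- The n-Godowski equation (n ≥ 3): the cyclic meet equals the cyclic meet with
the indices reversed (the substitution aᵢ ↦ a_{n-i+1} in 1-indexed notation,
i.e. i ↦ -(i+1) in `Fin n` notation). -/
theorem stmt_7 {L : Type*} (O : OL L)
    (hOML : ∀ a b c : L, O.le b a → O.le c (O.compl a) →
      O.meet a (O.join b c) = O.join (O.meet a b) (O.meet a c))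
    (S : Set (L → ℝ)) (hS : O.IsStrongQuantum S)
    (n : ℕ) (a : Fin (n + 3) → L) :
    O.goMeet a = O.goMeet (fun i => a (-(i + 1))) :=
  stmt_7_general O S hS n a
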